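/- arXiv:1509.04944 — 3 statements merged into one kernel-verified Lean document; each statement's English description precedes it below -/
import Mathlib

section
/- Let T be a tree with diameter at least 5 and no vertex of degree two. Then the geodetic number of the complement of T equals 4. -/
open SimpleGraph

/-- `S` is geodetic in `G`: every vertex lies on a shortest path (geodesic)
between two vertices of `S`. -/
def IsGeodetic {V : Type*} (G : SimpleGraph V) (S : Set V) : Prop :=
  ∀ z : V, ∃ x ∈ S, ∃ y ∈ S, ∃ p : G.Walk x y,
    p.IsPath ∧ p.length = G.dist x y ∧ z ∈ p.support

/-- The geodetic number of `G`: minimum cardinality of a geodetic set. -/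
noncomputable def geodeticNumber {V : Type*} (G : SimpleGraph V) : ℕ :=
  sInf {n | ∃ S : Set V, IsGeodetic G S ∧ S.ncard = n}

/-
Let `u, v` be at distance at least 5 in `G`. For every edge `xy` of `G` some vertex is at distance
at least 2 from both `x` and `y` (otherwise `dist u v ≤ 3`), so `x, y` are at distance exactly 2
in `Gᶜ` and every geodesic of `Gᶜ` has length at most 2. Hence `S` is geodetic in `Gᶜ` iff every
vertex outside `S` is a common non-neighbour (in `G`) of the ends of some edge of `G` inside `S`.
The end edges of a path realizing the diameter give such a set with 4 vertices. Conversely, if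
`|S| ≤ 3` then, `G` having no triangle, some `x ∈ S` lies on every edge of `G` inside `S`; then all
neighbours of `x` lie in `S`, so `deg x ≤ 2`, hence `x` is a leaf with neighbour `y`. The same
argument applies to `y`, and `G` would be a single edge.
-/

namespace SimpleGraph

variable {V : Type*} {G : SimpleGraph V} {u v x y z : V}

lemma Walk.adj_of_mem_support_of_length_le_two (p : G.Walk x y) (hp : p.length ≤ 2)
    (hz : z ∈ p.support) (hzx : z ≠ x) (hzy : z ≠ y) :
    p.length = 2 ∧ G.Adj x z ∧ G.Adj z y := by
  rcases p with _ | ⟨_, _ | ⟨_, _ | ⟨_, p⟩⟩⟩ <;> simp_all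

lemma dist_le_one_of_not_compl_adj (h : ¬Gᶜ.Adj x y) : G.dist x y ≤ 1 := by
  rw [compl_adj, not_and_not_right] at h
  by_cases hxy : x = y
  · simp [hxy]
  · exact (dist_eq_one_iff_adj.mpr (h hxy)).le

lemma exists_compl_adj_compl_adj_of_adj (hc : G.Connected) (huv : 4 ≤ G.dist u v)
    (hxy : G.Adj x y) : ∃ w, Gᶜ.Adj x w ∧ Gᶜ.Adj w y := by
  by_contra! h
  have hnear : ∀ w, G.dist x w ≤ 1 ∨ G.dist y w ≤ 1 := fun w => by
    by_cases hxw : Gᶜ.Adj x w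
    · exact .inr (dist_comm.trans_le (dist_le_one_of_not_compl_adj (h w hxw)))
    · exact .inl (dist_le_one_of_not_compl_adj hxw)
  have hu : G.dist u x ≤ 1 ∨ G.dist u y ≤ 1 := by
    rw [dist_comm, dist_comm (u := u)]
    exact hnear u
  have hxy1 : G.dist x y ≤ 1 := (dist_eq_one_iff_adj.mpr hxy).le
  have hyx1 : G.dist y x ≤ 1 := (dist_eq_one_iff_adj.mpr hxy.symm).le
  have := hc.dist_triangle (u := u) (v := x) (w := v)
  have := hc.dist_triangle (u := u) (v := y) (w := v)
  have := hc.dist_triangle (u := x) (v := y) (w := v)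
  have := hc.dist_triangle (u := y) (v := x) (w := v)
  rcases hu with hu | hu <;> rcases hnear v with hv | hv <;> omega

lemma compl_dist_eq_two_of_adj (hc : G.Connected) (huv : 4 ≤ G.dist u v) (hxy : G.Adj x y) :
    Gᶜ.dist x y = 2 := by
  obtain ⟨w, hxw, hwy⟩ := exists_compl_adj_compl_adj_of_adj hc huv hxy
  have hle : Gᶜ.dist x y ≤ 2 := Gᶜ.dist_le (.cons hxw (.cons hwy .nil))
  have hpos : 0 < Gᶜ.dist x y := Reachable.pos_dist_of_ne ⟨.cons hxw (.cons hwy .nil)⟩ hxy.ne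
  have hne : Gᶜ.dist x y ≠ 1 := fun h => ((compl_adj G x y).mp (dist_eq_one_iff_adj.mp h)).2 hxy
  omega

lemma compl_dist_le_two (hc : G.Connected) (huv : 4 ≤ G.dist u v) (x y : V) :
    Gᶜ.dist x y ≤ 2 := by
  by_cases hxy : G.Adj x y
  · exact (compl_dist_eq_two_of_adj hc huv hxy).le
  · exact (dist_le_one_of_not_compl_adj (by rwa [compl_compl])).trans one_le_two

theorem isGeodetic_compl_iff (hc : G.Connected) (huv : 4 ≤ G.dist u v) {S : Set V} :
    IsGeodetic Gᶜ S ↔ ∀ z ∉ S, ∃ x ∈ S, ∃ y ∈ S, G.Adj x y ∧ ¬G.Adj x z ∧ ¬G.Adj z y := by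
  constructor
  · intro hS z hz
    obtain ⟨x, hx, y, hy, p, -, hp, hzp⟩ := hS z
    obtain ⟨hp2, hxz, hzy⟩ := p.adj_of_mem_support_of_length_le_two
      (hp ▸ compl_dist_le_two hc huv x y) hzp (ne_of_mem_of_not_mem hx hz).symm
      (ne_of_mem_of_not_mem hy hz).symm
    refine ⟨x, hx, y, hy, ?_, ((compl_adj G x z).mp hxz).2, ((compl_adj G z y).mp hzy).2⟩
    by_contra hxy
    have := dist_le_one_of_not_compl_adj (G := Gᶜ) (by rwa [compl_compl])
    omega
  · intro hS z
    by_cases hz : z ∈ S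
    · exact ⟨z, hz, z, hz, .nil, .nil, by simp, by simp⟩
    obtain ⟨x, hx, y, hy, hxy, hxz, hzy⟩ := hS z hz
    have hzx : z ≠ x := ne_of_mem_of_not_mem hx hz |>.symm
    have hzy' : z ≠ y := ne_of_mem_of_not_mem hy hz |>.symm
    refine ⟨x, hx, y, hy, .cons ((compl_adj G x z).mpr ⟨hzx.symm, hxz⟩)
      (.cons ((compl_adj G z y).mpr ⟨hzy', hzy⟩) .nil), ?_, ?_, by simp⟩
    · simp [Walk.isPath_def, hzx.symm, hzy', hxy.ne]
    · simp [compl_dist_eq_two_of_adj hc huv hxy]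

lemma isGeodetic_compl_of_adj_of_adj (hc : G.Connected) (huv : 5 ≤ G.dist u v) {u' v' : V}
    (hu : G.Adj u u') (hv : G.Adj v' v) : IsGeodetic Gᶜ ({u, u'} ∪ {v', v}) := by
  rw [isGeodetic_compl_iff hc (show 4 ≤ G.dist u v by omega)]
  intro z _
  by_cases hzu : G.Adj u z ∨ G.Adj z u'
  · have huz : G.dist u z ≤ 2 :=
      hzu.elim (fun h => (dist_eq_one_iff_adj.mpr h).le.trans one_le_two)
        fun h => G.dist_le (.cons hu (.cons h.symm .nil))
    have hzv (hzv : G.Adj v' z ∨ G.Adj z v) : G.dist z v ≤ 2 :=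
      hzv.elim (fun h => G.dist_le (.cons h.symm (.cons hv .nil)))
        fun h => (dist_eq_one_iff_adj.mpr h).le.trans one_le_two
    have := hc.dist_triangle (u := u) (v := z) (w := v)
    exact ⟨v', by simp, v, by simp, hv, fun h => by have := hzv (.inl h); omega,
      fun h => by have := hzv (.inr h); omega⟩
  · rw [not_or] at hzu
    exact ⟨u, by simp, u', by simp, hu, hzu.1, hzu.2⟩

lemma exists_isGeodetic_compl_ncard_eq_four (hc : G.Connected) (huv : 5 ≤ G.dist u v) :
    ∃ S, IsGeodetic Gᶜ S ∧ S.ncard = 4 := by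
  obtain ⟨p, hp⟩ := hc.exists_walk_length_eq_dist u v
  have hnil : ¬p.Nil := Walk.not_nil_of_ne fun h => by simp [h] at huv
  have hu := p.adj_snd hnil
  have hv := p.adj_penultimate hnil
  refine ⟨_, isGeodetic_compl_of_adj_of_adj hc huv hu hv, ?_⟩
  have hdisj : Disjoint ({u, p.snd} : Set V) {p.penultimate, v} := by
    refine Set.disjoint_left.mpr fun a ha hav => ?_
    have hua : G.dist u a ≤ 1 := by
      rcases ha with rfl | rfl
      exacts [by simp, (dist_eq_one_iff_adj.mpr hu).le]
    have hav : G.dist a v ≤ 1 := by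
      rcases hav with rfl | rfl
      exacts [(dist_eq_one_iff_adj.mpr hv).le, by simp]
    have := hc.dist_triangle (u := u) (v := a) (w := v)
    omega
  rw [Set.ncard_union_eq hdisj, Set.ncard_pair hu.ne, Set.ncard_pair hv.ne]

lemma neighborSet_subset_of_forall_adj {S : Set V}
    (hS : ∀ z ∉ S, ∃ x ∈ S, ∃ y ∈ S, G.Adj x y ∧ ¬G.Adj x z ∧ ¬G.Adj z y)
    (hx : ∀ a ∈ S, ∀ b ∈ S, G.Adj a b → a = x ∨ b = x) : G.neighborSet x ⊆ S := by
  intro w hw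
  by_contra hwS
  obtain ⟨a, ha, b, hb, hab, haw, hwb⟩ := hS w hwS
  rcases hx a ha b hb hab with rfl | rfl
  exacts [haw hw, hwb hw.symm]

lemma neighborSet_eq_singleton_of_forall_adj [Finite V] {S : Set V}
    (hS : ∀ z ∉ S, ∃ x ∈ S, ∃ y ∈ S, G.Adj x y ∧ ¬G.Adj x z ∧ ¬G.Adj z y)
    (hS3 : S.ncard ≤ 3) (hxS : x ∈ S) (hxy : G.Adj x y) (hdeg : (G.neighborSet x).ncard ≠ 2)
    (hx : ∀ a ∈ S, ∀ b ∈ S, G.Adj a b → a = x ∨ b = x) : G.neighborSet x = {y} := by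
  have hsub : G.neighborSet x ⊆ S \ {x} := fun w hw =>
    ⟨neighborSet_subset_of_forall_adj hS hx hw, (G.ne_of_adj hw).symm⟩
  have hle : (G.neighborSet x).ncard ≤ 2 :=
    (Set.ncard_le_ncard hsub).trans (by rw [Set.ncard_sdiff_singleton_of_mem hxS]; omega)
  exact Set.eq_singleton_iff_unique_mem.mpr
    ⟨hxy, fun w hw => (Set.ncard_le_one).mp (by omega) w hw y hxy⟩

lemma exists_subset_insert_insert_singleton [Finite V] {S : Set V} {a b : V} (hS3 : S.ncard ≤ 3)
    (ha : a ∈ S) (hb : b ∈ S) (hab : a ≠ b) : ∃ c, S ⊆ {a, b, c} := by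
  have : Nonempty V := ⟨a⟩
  have hle : (S \ {a, b}).ncard ≤ 1 := by
    rw [Set.ncard_sdiff (Set.pair_subset ha hb), Set.ncard_pair hab]
    omega
  obtain ⟨c, hc⟩ := (Set.ncard_le_one_iff_subset_singleton).mp hle
  refine ⟨c, fun w hw => ?_⟩
  by_cases hwab : w ∈ ({a, b} : Set V)
  · rcases hwab with rfl | rfl <;> simp
  · exact .inr (.inr (hc ⟨hw, hwab⟩))

lemma forall_adj_eq_or_eq_of_subset {S : Set V} {a b c : V} (hS : S ⊆ {a, b, c})
    (hbc : ¬G.Adj b c) : ∀ p ∈ S, ∀ q ∈ S, G.Adj p q → p = a ∨ q = a := by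
  intro p hp q hq hpq
  rcases hS hp with rfl | rfl | rfl <;> rcases hS hq with rfl | rfl | rfl <;>
    simp_all [adj_comm]

lemma exists_adj_forall_adj_eq_or_eq [Finite V] (hG : G.CliqueFree 3) {S : Set V}
    (hS3 : S.ncard ≤ 3) {a b : V} (ha : a ∈ S) (hb : b ∈ S) (hab : G.Adj a b) :
    ∃ x ∈ S, ∃ y ∈ S, G.Adj x y ∧ ∀ p ∈ S, ∀ q ∈ S, G.Adj p q → p = x ∨ q = x := by
  classical
  obtain ⟨c, habc⟩ := exists_subset_insert_insert_singleton hS3 ha hb hab.ne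
  by_cases hbc : G.Adj b c
  · have hac : ¬G.Adj a c := fun hac => hG _ (is3Clique_triple_iff.mpr ⟨hab, hac, hbc⟩)
    exact ⟨b, hb, a, ha, hab.symm,
      forall_adj_eq_or_eq_of_subset (habc.trans (Set.insert_comm a b {c}).subset) hac⟩
  · exact ⟨a, ha, b, hb, hab, forall_adj_eq_or_eq_of_subset habc hbc⟩

lemma Connected.dist_lt_card [Fintype V] (hc : G.Connected) (u v : V) :
    G.dist u v < Fintype.card V := by
  obtain ⟨p, hp, hlen⟩ := hc.exists_path_of_dist u v
  exact hlen ▸ hp.length_lt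

lemma Connected.eq_or_eq_of_neighborSet_eq_singleton (hc : G.Connected)
    (hx : G.neighborSet x = {y}) (hy : G.neighborSet y = {x}) (w : V) : w = x ∨ w = y := by
  have hclosed : ∀ a b, G.Adj a b → (a = x ∨ a = y) → (b = x ∨ b = y) := by
    rintro a b hab (rfl | rfl)
    · exact .inr (hx ▸ hab : b ∈ ({y} : Set V))
    · exact .inl (hy ▸ hab : b ∈ ({x} : Set V))
  induction (reachable_iff_reflTransGen x w).mp (hc x w) with
  | refl => exact .inl rfl
  | tail _ hbc ih => exact hclosed _ _ hbc ih

theorem four_le_ncard_of_isGeodetic_compl [Fintype V] (hT : G.IsTree) (huv : 5 ≤ G.dist u v)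
    (hdeg : ∀ w, (G.neighborSet w).ncard ≠ 2) {S : Set V} (hS : IsGeodetic Gᶜ S) :
    4 ≤ S.ncard := by
  have hc := hT.connected
  by_contra! hS3
  replace hS3 : S.ncard ≤ 3 := by omega
  rw [isGeodetic_compl_iff hc (show 4 ≤ G.dist u v by omega)] at hS
  obtain ⟨z, hz⟩ := (Set.ne_univ_iff_exists_notMem S).mp fun h => by
    have := hc.dist_lt_card u v
    rw [h, Set.ncard_univ, Nat.card_eq_fintype_card] at hS3
    omega
  obtain ⟨a, ha, b, hb, hab, -, -⟩ := hS z hz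
  obtain ⟨x, hx, y, hy, hxy, hxS⟩ :=
    exists_adj_forall_adj_eq_or_eq (hT.isAcyclic.cliqueFree le_rfl) hS3 ha hb hab
  have hNx := neighborSet_eq_singleton_of_forall_adj hS hS3 hx hxy (hdeg x) hxS
  -- every edge of `G` inside `S` contains `x`, whose only neighbour is `y`
  have hyS : ∀ p ∈ S, ∀ q ∈ S, G.Adj p q → p = y ∨ q = y := by
    intro p hp q hq hpq
    rcases hxS p hp q hq hpq with rfl | rfl
    · exact .inr (hNx ▸ hpq : q ∈ ({y} : Set V))
    · exact .inl (hNx ▸ hpq.symm : p ∈ ({y} : Set V))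
  have hNy := neighborSet_eq_singleton_of_forall_adj hS hS3 hy hxy.symm (hdeg y) hyS
  have hK2 := hc.eq_or_eq_of_neighborSet_eq_singleton hNx hNy
  have : G.dist u v ≤ 1 := by
    rcases hK2 u with rfl | rfl <;> rcases hK2 v with rfl | rfl <;>
      simp [dist_eq_one_iff_adj.mpr hxy, dist_eq_one_iff_adj.mpr hxy.symm]
  omega

end SimpleGraph

/-- If `T` is a tree with diameter at least 5 and no vertex of degree two,
then the geodetic number of its complement is 4. -/
theorem geodeticNumber_compl_of_diam_ge_five {V : Type*} [Fintype V] (G : SimpleGraph V)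
    (hT : G.IsTree) (hd : 5 ≤ G.diam) (hdeg : ∀ v : V, (G.neighborSet v).ncard ≠ 2) :
    geodeticNumber Gᶜ = 4 := by
  have : Nonempty V := hT.connected.nonempty
  obtain ⟨u, v, huv⟩ := G.exists_dist_eq_diam
  have h5 : 5 ≤ G.dist u v := huv ▸ hd
  obtain ⟨S, hS, hS4⟩ := exists_isGeodetic_compl_ncard_eq_four hT.connected h5
  refine le_antisymm (Nat.sInf_le ⟨S, hS, hS4⟩) (le_csInf ⟨4, S, hS, hS4⟩ ?_)
  rintro n ⟨S', hS', rfl⟩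
  exact four_le_ncard_of_isGeodetic_compl hT h5 hdeg hS'
end

section
/- Let G be a graph whose complement is disconnected, with all components of the complement having at least 2 vertices and at least two such components (k ≥ 2). Then the geodetic number of G is at most 4. -/
open SimpleGraph

/-!
Vertices in different components of `Gᶜ` are adjacent in `G`. Pick a non-edge `x₁x₂` of `G`
inside one component `c` of `Gᶜ` and a non-edge `y₁y₂` inside another one. A vertex outside `c`
is a common neighbour of `x₁` and `x₂`, hence lies on the geodesic `x₁ z x₂` of length 2;
a vertex of `c` lies likewise on a geodesic `y₁ z y₂`. So `{x₁, x₂, y₁, y₂}` is geodetic.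
-/

namespace SimpleGraph

variable {V : Type*} {G : SimpleGraph V}

lemma ConnectedComponent.exists_adj_of_two_le_ncard {c : G.ConnectedComponent}
    (hc : 2 ≤ c.supp.ncard) : ∃ a b, G.Adj a b ∧ a ∈ c.supp ∧ b ∈ c.supp := by
  obtain ⟨x, y, hx, hy, hxy⟩ :=
    (Set.one_lt_ncard_iff (s := c.supp) (Set.finite_of_ncard_pos (by omega))).mp (by omega)
  obtain ⟨p⟩ : G.Reachable x y :=
    ConnectedComponent.exact (((c.mem_supp_iff x).mp hx).trans ((c.mem_supp_iff y).mp hy).symm)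
  have hadj : G.Adj x p.snd := p.adj_snd (p.not_nil_of_ne hxy)
  refine ⟨x, p.snd, hadj, hx, ?_⟩
  rw [ConnectedComponent.mem_supp_iff] at hx ⊢
  exact (connectedComponentMk_eq_of_adj hadj).symm.trans hx

lemma adj_of_connectedComponentMk_compl_ne {a b : V}
    (h : Gᶜ.connectedComponentMk a ≠ Gᶜ.connectedComponentMk b) : G.Adj a b := by
  simpa using (Gᶜ.reachable_or_compl_adj a b).resolve_left
    fun hab ↦ h (ConnectedComponent.sound hab)

lemma dist_eq_two_of_compl_adj {a b w : V} (hab : Gᶜ.Adj a b) (haw : G.Adj a w)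
    (hwb : G.Adj w b) : G.dist a b = 2 := by
  have hedist : G.edist a b = 2 :=
    edist_eq_two_iff.mpr ⟨hab.1, hab.2, w, G.mem_commonNeighbors.mpr ⟨haw, hwb.symm⟩⟩
  simp [dist, hedist]

lemma exists_geodesic_mem_support_of_compl_adj {a b w : V} (hab : Gᶜ.Adj a b)
    (haw : G.Adj a w) (hwb : G.Adj w b) :
    ∃ p : G.Walk a b, p.IsPath ∧ p.length = G.dist a b ∧ w ∈ p.support := by
  refine ⟨.cons haw (.cons hwb .nil), ?_, ?_, by simp⟩
  · simp [Walk.isPath_def, haw.ne, hab.ne, hwb.ne]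
  · simp [dist_eq_two_of_compl_adj hab haw hwb]

lemma exists_geodesic_mem_support_of_connectedComponentMk_ne {a b z : V} (hab : Gᶜ.Adj a b)
    (hz : Gᶜ.connectedComponentMk z ≠ Gᶜ.connectedComponentMk a) :
    ∃ p : G.Walk a b, p.IsPath ∧ p.length = G.dist a b ∧ z ∈ p.support := by
  have hb : Gᶜ.connectedComponentMk b = Gᶜ.connectedComponentMk a :=
    (ConnectedComponent.connectedComponentMk_eq_of_adj hab).symm
  exact exists_geodesic_mem_support_of_compl_adj hab
    (adj_of_connectedComponentMk_compl_ne hz.symm) (adj_of_connectedComponentMk_compl_ne (hb ▸ hz))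

end SimpleGraph

lemma geodeticNumber_le_ncard {V : Type*} {G : SimpleGraph V} {S : Set V}
    (hS : IsGeodetic G S) : geodeticNumber G ≤ S.ncard :=
  Nat.sInf_le ⟨S, hS, rfl⟩

lemma Set.ncard_le_four {α : Type*} (a b c d : α) : ({a, b, c, d} : Set α).ncard ≤ 4 := by
  classical
  have h := Set.ncard_coe_finset ({a, b, c, d} : Finset α)
  push_cast at h
  exact h ▸ Finset.card_le_four

theorem geodeticNumber_le_four_general {V : Type*} (G : SimpleGraph V)
    (h2 : ∀ c : Gᶜ.ConnectedComponent, 2 ≤ c.supp.ncard)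
    (h3 : ∃ c c' : Gᶜ.ConnectedComponent, c ≠ c') :
    geodeticNumber G ≤ 4 := by
  obtain ⟨c, c', hcc'⟩ := h3
  obtain ⟨x₁, x₂, hx, hx₁, -⟩ := ConnectedComponent.exists_adj_of_two_le_ncard (h2 c)
  obtain ⟨y₁, y₂, hy, hy₁, -⟩ := ConnectedComponent.exists_adj_of_two_le_ncard (h2 c')
  rw [ConnectedComponent.mem_supp_iff] at hx₁ hy₁
  refine le_trans (geodeticNumber_le_ncard fun z ↦ ?_) (Set.ncard_le_four x₁ x₂ y₁ y₂)
  by_cases hz : Gᶜ.connectedComponentMk z = c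
  · obtain ⟨p, hp⟩ := exists_geodesic_mem_support_of_connectedComponentMk_ne hy
      (z := z) (by rw [hz, hy₁]; exact hcc')
    exact ⟨y₁, by simp, y₂, by simp, p, hp⟩
  · obtain ⟨p, hp⟩ := exists_geodesic_mem_support_of_connectedComponentMk_ne hx
      (z := z) (hx₁ ▸ hz)
    exact ⟨x₁, by simp, x₂, by simp, p, hp⟩

/-- If the complement of `G` is disconnected with at least two components, all of
which have at least 2 vertices, then the geodetic number of `G` is at most 4. -/
theorem geodeticNumber_le_four {V : Type*} [Fintype V] (G : SimpleGraph V)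
    (h1 : ¬ Gᶜ.Connected)
    (h2 : ∀ c : Gᶜ.ConnectedComponent, 2 ≤ c.supp.ncard)
    (h3 : ∃ c c' : Gᶜ.ConnectedComponent, c ≠ c') :
    geodeticNumber G ≤ 4 :=
  geodeticNumber_le_four_general G h2 h3
end

section
/- Let G be a thin spider with head R ≠ ∅, body K, and feet S. Then every minimum geodetic set of G consists of S together with a minimum 2-geodetic set of G[R], i.e., g(G) = |S| + g_2(G[R]). -/
open SimpleGraph

/-- A geodetic set `D` is 2-geodetic if every vertex outside `D` has two
nonadjacent neighbors in `D`. -/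
def Is2Geodetic {V : Type*} (G : SimpleGraph V) (D : Set V) : Prop :=
  IsGeodetic G D ∧ ∀ x : V, x ∉ D →
    ∃ a ∈ D, ∃ b ∈ D, a ≠ b ∧ G.Adj x a ∧ G.Adj x b ∧ ¬ G.Adj a b

/-- The 2-geodetic number of `G`: minimum cardinality of a 2-geodetic set. -/
noncomputable def geodetic2Number {V : Type*} (G : SimpleGraph V) : ℕ :=
  sInf {n | ∃ D : Set V, Is2Geodetic G D ∧ D.ncard = n}

section Geodetic

variable {V : Type*} {G : SimpleGraph V} {x y z : V}

def geodeticInterval (G : SimpleGraph V) (x y : V) : Set V :=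
  {z | ∃ p : G.Walk x y, p.IsPath ∧ p.length = G.dist x y ∧ z ∈ p.support}

lemma mem_geodeticInterval_of_walk (p : G.Walk x y) (hp : p.length = G.dist x y)
    (hz : z ∈ p.support) : z ∈ geodeticInterval G x y :=
  ⟨p, p.isPath_of_length_eq_dist hp, hp, hz⟩

lemma mem_geodeticInterval_self : x ∈ geodeticInterval G x x :=
  mem_geodeticInterval_of_walk .nil (by simp) (by simp)

lemma dist_eq_two_of_adj_of_adj (hxy : x ≠ y) (hnxy : ¬ G.Adj x y) (hxz : G.Adj x z)
    (hzy : G.Adj z y) : G.dist x y = 2 := by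
  have h : G.edist x y = 2 := edist_eq_two_iff.mpr ⟨hxy, hnxy, z, hxz, hzy.symm⟩
  simp [SimpleGraph.dist, h]

lemma mem_geodeticInterval_of_adj_of_adj (hxy : x ≠ y) (hnxy : ¬ G.Adj x y)
    (hxz : G.Adj x z) (hzy : G.Adj z y) : z ∈ geodeticInterval G x y :=
  mem_geodeticInterval_of_walk (.cons hxz (.cons hzy .nil))
    (dist_eq_two_of_adj_of_adj hxy hnxy hxz hzy).symm (by simp)

lemma dist_le_two_of_adj_or_eq (hxz : G.Adj x z ∨ x = z) (hzy : G.Adj z y ∨ z = y) :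
    G.dist x y ≤ 2 := by
  have h : G.edist x y ≤ 2 := calc
    G.edist x y ≤ G.edist x z + G.edist z y := G.edist_triangle
    _ ≤ 1 + 1 :=
      add_le_add (edist_le_one_iff_adj_or_eq.mpr hxz) (edist_le_one_iff_adj_or_eq.mpr hzy)
    _ = 2 := one_add_one_eq_two
  exact ENat.toNat_le_of_le_natCast h

lemma exists_adj_adj_of_mem_geodeticInterval (hz : z ∈ geodeticInterval G x y) (hzx : z ≠ x)
    (hzy : z ≠ y) : ∃ u v, G.Adj z u ∧ G.Adj z v ∧ u ≠ v ∧ ¬ G.Adj u v ∧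
      ∃ (q₁ : G.Walk x u) (q₂ : G.Walk v y), q₁.length + q₂.length + 2 = G.dist x y := by
  classical
  obtain ⟨p, -, hp, hzp⟩ := hz
  have hsplit : (p.takeUntil z hzp).length + (p.dropUntil z hzp).length = G.dist x y := by
    rw [← hp, ← Walk.length_append, Walk.take_spec]
  obtain ⟨u, hzu, q₁, hq₁⟩ := Walk.exists_eq_cons_of_ne hzx (p.takeUntil z hzp).reverse
  obtain ⟨v, hzv, q₂, hq₂⟩ := Walk.exists_eq_cons_of_ne hzy (p.dropUntil z hzp)
  have hlen : q₁.length + q₂.length + 2 = G.dist x y := by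
    have h₁ := congrArg Walk.length hq₁
    have h₂ := congrArg Walk.length hq₂
    simp only [Walk.length_reverse, Walk.length_cons] at h₁ h₂
    omega
  refine ⟨u, v, hzu, hzv, ?_, ?_, q₁.reverse, q₂, by rwa [Walk.length_reverse]⟩
  · rintro rfl
    have := G.dist_le (q₁.reverse.append q₂)
    simp only [Walk.length_append, Walk.length_reverse] at this
    omega
  · intro huv
    have := G.dist_le (q₁.reverse.append (.cons huv q₂))
    simp only [Walk.length_append, Walk.length_reverse, Walk.length_cons] at this
    omega

lemma mem_of_isGeodetic_of_isClique_neighborSet {T : Set V} (hT : IsGeodetic G T)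
    (hz : G.IsClique (G.neighborSet z)) : z ∈ T := by
  obtain ⟨x, hx, y, hy, hzxy⟩ := hT z
  by_cases hzx : z = x
  · exact hzx ▸ hx
  by_cases hzy : z = y
  · exact hzy ▸ hy
  obtain ⟨u, v, hzu, hzv, huv, hnuv, -⟩ :=
    exists_adj_adj_of_mem_geodeticInterval hzxy hzx hzy
  exact absurd (hz hzu hzv huv) hnuv

lemma isGeodetic_univ (G : SimpleGraph V) : IsGeodetic G Set.univ :=
  fun _ ↦ ⟨_, trivial, _, trivial, mem_geodeticInterval_self⟩

lemma is2Geodetic_of_forall_notMem {D : Set V}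
    (h : ∀ x ∉ D,
      ∃ a ∈ D, ∃ b ∈ D, a ≠ b ∧ G.Adj x a ∧ G.Adj x b ∧ ¬ G.Adj a b) :
    Is2Geodetic G D := by
  refine ⟨fun z ↦ ?_, h⟩
  by_cases hz : z ∈ D
  · exact ⟨z, hz, z, hz, mem_geodeticInterval_self⟩
  obtain ⟨a, ha, b, hb, hab, hza, hzb, hnab⟩ := h z hz
  exact ⟨a, ha, b, hb, mem_geodeticInterval_of_adj_of_adj hab hnab hza.symm hzb⟩

lemma is2Geodetic_univ (G : SimpleGraph V) : Is2Geodetic G Set.univ :=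
  is2Geodetic_of_forall_notMem fun _ hx ↦ absurd trivial hx

lemma exists_isGeodetic_ncard_eq_geodeticNumber (G : SimpleGraph V) :
    ∃ T, IsGeodetic G T ∧ T.ncard = geodeticNumber G :=
  Nat.sInf_mem (s := {n | ∃ T : Set V, IsGeodetic G T ∧ T.ncard = n})
    ⟨_, _, isGeodetic_univ G, rfl⟩

lemma geodeticNumber_le_ncard_s17 {T : Set V} (hT : IsGeodetic G T) : geodeticNumber G ≤ T.ncard :=
  Nat.sInf_le ⟨T, hT, rfl⟩

lemma exists_is2Geodetic_ncard_eq_geodetic2Number (G : SimpleGraph V) :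
    ∃ D, Is2Geodetic G D ∧ D.ncard = geodetic2Number G :=
  Nat.sInf_mem (s := {n | ∃ D : Set V, Is2Geodetic G D ∧ D.ncard = n})
    ⟨_, _, is2Geodetic_univ G, rfl⟩

lemma geodetic2Number_le_ncard {D : Set V} (hD : Is2Geodetic G D) :
    geodetic2Number G ≤ D.ncard :=
  Nat.sInf_le ⟨D, hD, rfl⟩

lemma Set.ncard_union_image_val [Finite V] {S R : Set V} (h : Disjoint S R) (D : Set R) :
    (S ∪ (↑) '' D).ncard = S.ncard + D.ncard := by
  rw [Set.ncard_union_eq (h.mono_right (Subtype.coe_image_subset R D)),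
    Set.ncard_image_of_injective _ Subtype.val_injective]

end Geodetic

structure IsThinSpider {V : Type*} (G : SimpleGraph V) (S K R : Set V) (f : V → V) : Prop where
  disjoint_feet_head : Disjoint S R
  union_eq_univ : S ∪ K ∪ R = Set.univ
  isIndepSet_feet : G.IsIndepSet S
  isClique_body : G.IsClique K
  ncard_feet_eq : S.ncard = K.ncard
  two_le_ncard_body : 2 ≤ K.ncard
  adj_head_body : ∀ r ∈ R, ∀ k ∈ K, G.Adj r k
  not_adj_head_feet : ∀ r ∈ R, ∀ a ∈ S, ¬ G.Adj r a
  bijOn : Set.BijOn f S K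
  adj_feet_body_iff : ∀ a ∈ S, ∀ k ∈ K, (G.Adj a k ↔ k = f a)

namespace IsThinSpider

variable {V : Type*} {G : SimpleGraph V} {S K R T : Set V} {f : V → V} {a b k r u v x y : V}

lemma mem_or (hG : IsThinSpider G S K R f) (x : V) : x ∈ S ∨ x ∈ K ∨ x ∈ R := by
  have hx : x ∈ S ∪ K ∪ R := hG.union_eq_univ ▸ Set.mem_univ x
  simpa only [Set.mem_union, or_assoc] using hx

lemma adj_map (hG : IsThinSpider G S K R f) (ha : a ∈ S) : G.Adj a (f a) :=
  (hG.adj_feet_body_iff a ha _ (hG.bijOn.mapsTo ha)).mpr rfl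

lemma adj_map_map (hG : IsThinSpider G S K R f) (ha : a ∈ S) (hb : b ∈ S) (hab : a ≠ b) :
    G.Adj (f a) (f b) :=
  hG.isClique_body (hG.bijOn.mapsTo ha) (hG.bijOn.mapsTo hb) fun h ↦ hab (hG.bijOn.injOn ha hb h)

lemma eq_map_of_adj (hG : IsThinSpider G S K R f) (ha : a ∈ S) (hau : G.Adj a u) : u = f a := by
  rcases hG.mem_or u with hu | hu | hu
  · exact absurd hau (hG.isIndepSet_feet ha hu hau.ne)
  · exact (hG.adj_feet_body_iff a ha u hu).mp hau
  · exact absurd hau.symm (hG.not_adj_head_feet u hu a ha)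

lemma subset_of_isGeodetic (hG : IsThinSpider G S K R f) (hT : IsGeodetic G T) : S ⊆ T :=
  fun _ ha ↦ mem_of_isGeodetic_of_isClique_neighborSet hT <| IsClique.of_subsingleton
    fun _ hu _ hv ↦ (hG.eq_map_of_adj ha hu).trans (hG.eq_map_of_adj ha hv).symm

def walkThroughBody (hG : IsThinSpider G S K R f) (ha : a ∈ S) (hb : b ∈ S) (hab : a ≠ b) :
    G.Walk a b :=
  .cons (hG.adj_map ha) (.cons (hG.adj_map_map ha hb hab) (.cons (hG.adj_map hb).symm .nil))

lemma dist_eq_three (hG : IsThinSpider G S K R f) (ha : a ∈ S) (hb : b ∈ S) (hab : a ≠ b) :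
    G.dist a b = 3 := by
  let p := hG.walkThroughBody ha hb hab
  have h3 : G.edist a b ≤ 3 := p.edist_le
  have h2 : 2 < G.edist a b := two_lt_edist_iff.mpr ⟨hab, hG.isIndepSet_feet ha hb hab,
    Set.eq_empty_iff_forall_notMem.mpr fun _ ⟨haw, hbw⟩ ↦ hab <| hG.bijOn.injOn ha hb <|
      (hG.eq_map_of_adj ha haw).symm.trans (hG.eq_map_of_adj hb hbw)⟩
  rw [← p.reachable.coe_dist_eq_edist] at h2 h3
  norm_cast at h2 h3
  omega

lemma map_mem_geodeticInterval (hG : IsThinSpider G S K R f) (ha : a ∈ S) (hb : b ∈ S)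
    (hab : a ≠ b) : f a ∈ geodeticInterval G a b :=
  mem_geodeticInterval_of_walk (hG.walkThroughBody ha hb hab) (hG.dist_eq_three ha hb hab).symm
    (by simp [walkThroughBody])

lemma adj_or_eq_of_mem_body (hG : IsThinSpider G S K R f) (hx : x ∉ S) (hk : k ∈ K) :
    G.Adj x k ∨ x = k := by
  rcases hG.mem_or x with hxS | hxK | hxR
  · exact absurd hxS hx
  · exact (em (x = k)).symm.imp_left (hG.isClique_body hxK hk)
  · exact .inl (hG.adj_head_body x hxR k hk)

lemma exists_mem_body_adj_or_eq (hG : IsThinSpider G S K R f) (y : V) :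
    ∃ k ∈ K, G.Adj k y ∨ k = y := by
  rcases hG.mem_or y with hy | hy | hy
  · exact ⟨f y, hG.bijOn.mapsTo hy, .inl (hG.adj_map hy).symm⟩
  · exact ⟨y, hy, .inr rfl⟩
  · obtain ⟨k, hk⟩ :=
      Set.nonempty_of_ncard_ne_zero (s := K) (by linarith [hG.two_le_ncard_body])
    exact ⟨k, hk, .inl (hG.adj_head_body y hy k hk).symm⟩

lemma dist_le_two (hG : IsThinSpider G S K R f) (hx : x ∉ S) (y : V) : G.dist x y ≤ 2 := by
  obtain ⟨k, hk, hky⟩ := hG.exists_mem_body_adj_or_eq y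
  exact dist_le_two_of_adj_or_eq (hG.adj_or_eq_of_mem_body hx hk) hky

lemma dist_le_three (hG : IsThinSpider G S K R f) (x y : V) : G.dist x y ≤ 3 := by
  by_cases hx : x ∈ S
  · by_cases hy : y ∈ S
    · rcases eq_or_ne x y with rfl | hxy
      · simp
      · exact (hG.dist_eq_three hx hy hxy).le
    · exact dist_comm (G := G) ▸ (hG.dist_le_two hy x).trans (by norm_num)
  · exact (hG.dist_le_two hx y).trans (by norm_num)

lemma mem_head_of_adj_of_adj (hG : IsThinSpider G S K R f) (hr : r ∈ R) (hru : G.Adj r u)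
    (hrv : G.Adj r v) (huv : u ≠ v) (hnuv : ¬ G.Adj u v) : u ∈ R := by
  have hnbr : ∀ {w}, G.Adj r w → w ∈ K ∨ w ∈ R := fun {w} hrw ↦
    (hG.mem_or w).resolve_left fun hw ↦ hG.not_adj_head_feet r hr w hw hrw
  refine (hnbr hru).resolve_left fun hu ↦ hnuv ?_
  rcases hnbr hrv with hv | hv
  · exact hG.isClique_body hu hv huv
  · exact (hG.adj_head_body v hv u hu).symm

lemma exists_adj_adj_of_isGeodetic (hG : IsThinSpider G S K R f) (hT : IsGeodetic G T)
    (hr : r ∈ R) (hrT : r ∉ T) :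
    ∃ a ∈ T ∩ R, ∃ b ∈ T ∩ R, a ≠ b ∧ G.Adj r a ∧ G.Adj r b ∧ ¬ G.Adj a b := by
  obtain ⟨x, hx, y, hy, hrxy⟩ := hT r
  obtain ⟨u, v, hru, hrv, huv, hnuv, q₁, q₂, hq⟩ :=
    exists_adj_adj_of_mem_geodeticInterval hrxy (fun h ↦ hrT (h ▸ hx)) fun h ↦ hrT (h ▸ hy)
  have huR := hG.mem_head_of_adj_of_adj hr hru hrv huv hnuv
  have hvR := hG.mem_head_of_adj_of_adj hr hrv hru huv.symm fun h ↦ hnuv h.symm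
  -- a geodesic between two feet through `r` would have length at least 4
  have hxy : x ∉ S ∨ y ∉ S := by
    by_contra! hxyS
    have h₁ : q₁.length ≠ 0 := fun h ↦
      hG.disjoint_feet_head.ne_of_mem hxyS.1 huR (Walk.eq_of_length_eq_zero h)
    have h₂ : q₂.length ≠ 0 := fun h ↦
      hG.disjoint_feet_head.ne_of_mem hxyS.2 hvR (Walk.eq_of_length_eq_zero h).symm
    have := hG.dist_le_three x y
    omega
  have hle : G.dist x y ≤ 2 :=
    hxy.elim (hG.dist_le_two · y) fun hy ↦ dist_comm (G := G) ▸ hG.dist_le_two hy x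
  obtain rfl : x = u := Walk.eq_of_length_eq_zero (by omega : q₁.length = 0)
  obtain rfl : v = y := Walk.eq_of_length_eq_zero (by omega : q₂.length = 0)
  exact ⟨x, ⟨hx, huR⟩, v, ⟨hy, hvR⟩, huv, hru, hrv, hnuv⟩

lemma is2Geodetic_preimage (hG : IsThinSpider G S K R f) (hT : IsGeodetic G T) :
    Is2Geodetic (G.induce R) ((↑) ⁻¹' T) :=
  is2Geodetic_of_forall_notMem fun r hr ↦ by
    obtain ⟨a, ⟨haT, haR⟩, b, ⟨hbT, hbR⟩, hab, hra, hrb, hnab⟩ :=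
      hG.exists_adj_adj_of_isGeodetic hT r.2 hr
    exact ⟨⟨a, haR⟩, haT, ⟨b, hbR⟩, hbT, fun h ↦ hab (congrArg Subtype.val h), hra, hrb,
      hnab⟩

lemma isGeodetic_union_image (hG : IsThinSpider G S K R f) {D : Set R}
    (hD : Is2Geodetic (G.induce R) D) : IsGeodetic G (S ∪ (↑) '' D) := by
  intro z
  rcases hG.mem_or z with hz | hz | hz
  · exact ⟨z, .inl hz, z, .inl hz, mem_geodeticInterval_self⟩
  · obtain ⟨a, ha, rfl⟩ := hG.bijOn.surjOn hz
    obtain ⟨b, hb, hba⟩ := Set.exists_ne_of_one_lt_ncard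
      (by linarith [hG.ncard_feet_eq, hG.two_le_ncard_body] : 1 < S.ncard) a
    exact ⟨a, .inl ha, b, .inl hb, hG.map_mem_geodeticInterval ha hb hba.symm⟩
  · by_cases hzD : ⟨z, hz⟩ ∈ D
    · exact ⟨z, .inr ⟨_, hzD, rfl⟩, z, .inr ⟨_, hzD, rfl⟩, mem_geodeticInterval_self⟩
    obtain ⟨a, ha, b, hb, hab, hza, hzb, hnab⟩ := hD.2 ⟨z, hz⟩ hzD
    exact ⟨a, .inr ⟨a, ha, rfl⟩, b, .inr ⟨b, hb, rfl⟩,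
      mem_geodeticInterval_of_adj_of_adj (Subtype.coe_ne_coe.mpr hab) hnab hza.symm hzb⟩

end IsThinSpider

theorem geodeticNumber_thinSpider_general {V : Type*} [Fintype V] (G : SimpleGraph V)
    (S K R : Set V)
    (hSR : Disjoint S R)
    (hcover : S ∪ K ∪ R = Set.univ)
    (hSindep : ∀ a ∈ S, ∀ b ∈ S, a ≠ b → ¬ G.Adj a b)
    (hKclique : G.IsClique K)
    (hcard : S.ncard = K.ncard) (hK2 : 2 ≤ K.ncard)
    (hRK : ∀ r ∈ R, ∀ k ∈ K, G.Adj r k)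
    (hRS : ∀ r ∈ R, ∀ a ∈ S, ¬ G.Adj r a)
    (hmatch : ∃ f : V → V, Set.BijOn f S K ∧
      ∀ a ∈ S, ∀ k ∈ K, (G.Adj a k ↔ k = f a)) :
    geodeticNumber G = S.ncard + geodetic2Number (G.induce R) := by
  obtain ⟨f, hf, hfadj⟩ := hmatch
  have hG : IsThinSpider G S K R f :=
    ⟨hSR, hcover, fun a ha b hb ↦ hSindep a ha b hb, hKclique, hcard, hK2, hRK, hRS, hf,
      hfadj⟩
  refine le_antisymm ?_ ?_
  · obtain ⟨D, hD, hDcard⟩ := exists_is2Geodetic_ncard_eq_geodetic2Number (G.induce R)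
    calc geodeticNumber G ≤ (S ∪ (↑) '' D).ncard :=
          geodeticNumber_le_ncard_s17 (hG.isGeodetic_union_image hD)
      _ = S.ncard + geodetic2Number (G.induce R) := by
          rw [Set.ncard_union_image_val hSR, hDcard]
  · obtain ⟨T, hT, hTcard⟩ := exists_isGeodetic_ncard_eq_geodeticNumber G
    calc S.ncard + geodetic2Number (G.induce R) ≤ S.ncard + ((↑) ⁻¹' T : Set R).ncard :=
          Nat.add_le_add_left (geodetic2Number_le_ncard (hG.is2Geodetic_preimage hT)) _
      _ = (S ∪ (↑) '' ((↑) ⁻¹' T : Set R)).ncard := (Set.ncard_union_image_val hSR _).symm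
      _ ≤ T.ncard := Set.ncard_le_ncard
          (Set.union_subset (hG.subset_of_isGeodetic hT) (Set.image_preimage_subset _ _))
      _ = geodeticNumber G := hTcard

/-- For a thin spider `G` with feet `S`, body `K` and nonempty head `R`,
`g(G) = |S| + g₂(G[R])`. -/
theorem geodeticNumber_thinSpider {V : Type*} [Fintype V] (G : SimpleGraph V)
    (S K R : Set V)
    (hSK : Disjoint S K) (hSR : Disjoint S R) (hKR : Disjoint K R)
    (hcover : S ∪ K ∪ R = Set.univ)
    (hSindep : ∀ a ∈ S, ∀ b ∈ S, a ≠ b → ¬ G.Adj a b)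
    (hKclique : G.IsClique K)
    (hcard : S.ncard = K.ncard) (hK2 : 2 ≤ K.ncard)
    (hRK : ∀ r ∈ R, ∀ k ∈ K, G.Adj r k)
    (hRS : ∀ r ∈ R, ∀ a ∈ S, ¬ G.Adj r a)
    (hmatch : ∃ f : V → V, Set.BijOn f S K ∧
      ∀ a ∈ S, ∀ k ∈ K, (G.Adj a k ↔ k = f a))
    (hR : R.Nonempty) :
    geodeticNumber G = S.ncard + geodetic2Number (G.induce R) :=
  geodeticNumber_thinSpider_general G S K R hSR hcover hSindep hKclique hcard hK2 hRK hRS hmatch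
end
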